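/- arXiv:2406.07373 — 3 statements merged into one kernel-verified Lean document; each statement's English description precedes it below -/
import Mathlib

section
/- Let F : ℝ^d → ℝ be twice continuously differentiable and convex, and for α > 0 let x*_α be the unique minimizer of F(x) + (α/2)‖x‖², assumed to be a differentiable function of α satisfying the optimality condition ∇F(x*_α) = -α x*_α. Then for all 0 < α < α', ‖x*_{α'}‖ ≤ ‖x*_α‖, i.e., the norm of the regularized minimizer is nonincreasing in α. -/
theorem le_of_forall_add_mul_le_of_lt {α : Type*} {f g : α → ℝ} {a b : ℝ} {x y : α}
    (hab : a < b) (hx : ∀ z, f x + a * g x ≤ f z + a * g z)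
    (hy : ∀ z, f y + b * g y ≤ f z + b * g z) : g y ≤ g x := by
  have hsum : (b - a) * g y ≤ (b - a) * g x := by linarith [hx y, hy x]
  exact le_of_mul_le_mul_left hsum (sub_pos.2 hab)

theorem regularized_minimizer_norm_mono_general {d : ℕ} (F : EuclideanSpace ℝ (Fin d) → ℝ)
    (xc : ℝ → EuclideanSpace ℝ (Fin d))
    (hmin : ∀ α, 0 < α → ∀ y, F (xc α) + (α / 2) * ‖xc α‖ ^ 2 ≤ F y + (α / 2) * ‖y‖ ^ 2) :
    ∀ α α', 0 < α → α < α' → ‖xc α'‖ ≤ ‖xc α‖ := by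
  intro α α' hα hlt
  have hsq : ‖xc α'‖ ^ 2 ≤ ‖xc α‖ ^ 2 :=
    le_of_forall_add_mul_le_of_lt (f := F) (g := fun y ↦ ‖y‖ ^ 2)
      (by linarith : α / 2 < α' / 2) (hmin α hα) (hmin α' (hα.trans hlt))
  exact (pow_le_pow_iff_left₀ (norm_nonneg _) (norm_nonneg _) two_ne_zero).1 hsq

/-- Monotonicity of the norm of the regularized minimizer: for twice continuously
differentiable convex `F`, with `x*_α` the unique minimizer of `F(x) + (α/2)‖x‖²`,
differentiable in `α` and satisfying `∇F(x*_α) = -α x*_α`, the map `α ↦ ‖x*_α‖` is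
nonincreasing on `(0, ∞)`. -/
theorem regularized_minimizer_norm_mono {d : ℕ} (F : EuclideanSpace ℝ (Fin d) → ℝ)
    (hF : ContDiff ℝ 2 F) (hconv : ConvexOn ℝ Set.univ F)
    (xc : ℝ → EuclideanSpace ℝ (Fin d))
    (hdiff : ∀ α, 0 < α → DifferentiableAt ℝ xc α)
    (hmin : ∀ α, 0 < α → ∀ y, F (xc α) + (α / 2) * ‖xc α‖ ^ 2 ≤ F y + (α / 2) * ‖y‖ ^ 2)
    (huniq : ∀ α, 0 < α → ∀ y,
      F y + (α / 2) * ‖y‖ ^ 2 ≤ F (xc α) + (α / 2) * ‖xc α‖ ^ 2 → y = xc α)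
    (hopt : ∀ α, 0 < α → gradient F (xc α) = -α • xc α) :
    ∀ α α', 0 < α → α < α' → ‖xc α'‖ ≤ ‖xc α‖ :=
  regularized_minimizer_norm_mono_general F xc hmin
end

section
/- Let F : ℝ^d → ℝ be twice continuously differentiable and convex, and for α > 0 let x*_α minimize F(x) + (α/2)‖x‖², with the curve α ↦ x*_α differentiable and satisfying d/dα x*_α = -(∇²F(x*_α) + αI)^{-1} x*_α. Then for all 0 < α < α', ‖x*_α - x*_{α'}‖ ≤ ‖x*_α‖ · log(α'/α). -/
/-!
Testing the minimality of `x*_a` against `x*_b` and vice versa shows that `‖x*_t‖` is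
nonincreasing in `t`. Pairing `(∇²F(x*_t) + t I) ẋ*_t = -x*_t` with `ẋ*_t` and using that the
Hessian of the convex `F` is positive semidefinite gives `‖ẋ*_t‖ ≤ ‖x*_t‖ / t ≤ ‖x*_α‖ / t` for
`t ≥ α`; integrating this bound from `α` to `α'` produces `‖x*_α‖ log (α' / α)`.
-/

open Set Real InnerProductSpace

section Gradient

variable {E : Type*} [NormedAddCommGroup E] [InnerProductSpace ℝ E] [CompleteSpace E]
  {F : E → ℝ}

lemma ContDiff.differentiable_gradient (hF : ContDiff ℝ 2 F) : Differentiable ℝ (gradient F) :=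
  (toDual ℝ E).symm.toContinuousLinearEquiv.differentiable.comp
    ((hF.fderiv_right (by norm_num)).differentiable one_ne_zero)

lemma ConvexOn.monotone_inner_gradient_add_smul (hconv : ConvexOn ℝ univ F)
    (hF : Differentiable ℝ F) (x v : E) :
    Monotone fun s : ℝ => ⟪gradient F (x + s • v), v⟫_ℝ := by
  have hline : ∀ s : ℝ, HasDerivAt (fun s : ℝ => x + s • v) v s := fun s => by
    simpa using ((hasDerivAt_id s).smul_const v).const_add x
  have hderiv : ∀ s : ℝ, HasDerivAt (fun s => F (x + s • v)) ⟪gradient F (x + s • v), v⟫_ℝ s :=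
    fun s => by
      rw [inner_gradient_left]
      exact (hF _).hasFDerivAt.comp_hasDerivAt s (hline s)
  have hconv_line : ConvexOn ℝ univ fun s : ℝ => F (x + s • v) := by
    simpa [Function.comp_def, AffineMap.lineMap_apply, add_comm] using
      hconv.comp_affineMap (AffineMap.lineMap x (x + v))
  intro a b hab
  simpa only [(hderiv a).deriv, (hderiv b).deriv] using
    hconv_line.monotoneOn_deriv (fun s _ => (hderiv s).differentiableAt)
      (mem_univ a) (mem_univ b) hab

lemma ConvexOn.inner_fderiv_gradient_apply_self_nonneg (hconv : ConvexOn ℝ univ F)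
    (hF : Differentiable ℝ F) {x : E} (hgrad : DifferentiableAt ℝ (gradient F) x) (v : E) :
    0 ≤ ⟪fderiv ℝ (gradient F) x v, v⟫_ℝ := by
  have hline : HasDerivAt (fun s : ℝ => gradient F (x + s • v)) (fderiv ℝ (gradient F) x v) 0 := by
    have hpath : HasDerivAt (fun s : ℝ => x + s • v) v 0 := by
      simpa using ((hasDerivAt_id (0 : ℝ)).smul_const v).const_add x
    exact hgrad.hasFDerivAt.comp_hasDerivAt_of_eq 0 hpath (by simp)
  exact ((hline.inner ℝ (hasDerivAt_const 0 v)).congr_deriv (by simp)).nonneg_of_monotone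
    (hconv.monotone_inner_gradient_add_smul hF x v)

end Gradient

lemma norm_le_norm_div_of_add_smul_eq {E : Type*} [NormedAddCommGroup E] [InnerProductSpace ℝ E]
    {H : E →L[ℝ] E} (hH : ∀ v, 0 ≤ ⟪H v, v⟫_ℝ) {t : ℝ} (ht : 0 < t) {v y : E}
    (h : H v + t • v = y) : ‖v‖ ≤ ‖y‖ / t := by
  have hinner : ⟪H v, v⟫_ℝ + t * ‖v‖ ^ 2 = ⟪y, v⟫_ℝ := by
    rw [← h, inner_add_left, real_inner_smul_left, real_inner_self_eq_norm_sq]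
  have hquad : t * ‖v‖ ^ 2 ≤ ‖y‖ * ‖v‖ := by
    nlinarith [hH v, real_inner_le_norm y v]
  rcases (norm_nonneg v).eq_or_lt with hv | hv
  · rw [← hv]; positivity
  · rw [le_div_iff₀ ht]; nlinarith

lemma norm_le_of_forall_add_smul_norm_sq_le {E : Type*} [SeminormedAddCommGroup E] (F : E → ℝ)
    {a b : ℝ} {xa xb : E} (hab : a < b)
    (ha : ∀ y, F xa + a / 2 * ‖xa‖ ^ 2 ≤ F y + a / 2 * ‖y‖ ^ 2)
    (hb : ∀ y, F xb + b / 2 * ‖xb‖ ^ 2 ≤ F y + b / 2 * ‖y‖ ^ 2) : ‖xb‖ ≤ ‖xa‖ := by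
  have hsq : ‖xb‖ ^ 2 ≤ ‖xa‖ ^ 2 := by nlinarith [ha xb, hb xa]
  exact (pow_le_pow_iff_left₀ (norm_nonneg _) (norm_nonneg _) two_ne_zero).1 hsq

lemma norm_sub_le_mul_log_of_norm_deriv_le {E : Type*} [NormedAddCommGroup E] [NormedSpace ℝ E]
    {f f' : ℝ → E} {C a b : ℝ} (ha : 0 < a) (hab : a ≤ b)
    (hf : ∀ t ∈ Icc a b, HasDerivAt f (f' t) t) (hbound : ∀ t ∈ Icc a b, ‖f' t‖ ≤ C / t) :
    ‖f b - f a‖ ≤ C * log (b / a) := by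
  have hlog : ∀ t ∈ Icc a b, HasDerivAt (fun t => C * (log t - log a)) (C / t) t := fun t ht => by
    simpa [div_eq_mul_inv] using
      ((hasDerivAt_log (ha.trans_le ht.1).ne').sub_const (log a)).const_mul C
  rw [log_div (ha.trans_le hab).ne' ha.ne']
  refine image_norm_le_of_norm_deriv_right_le_deriv_boundary' (f := fun t => f t - f a)
    (fun t ht => ((hf t ht).sub_const (f a)).continuousAt.continuousWithinAt)
    (fun t ht => ((hf t (Ico_subset_Icc_self ht)).sub_const (f a)).hasDerivWithinAt)
    (by simp) (fun t ht => (hlog t ht).continuousAt.continuousWithinAt)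
    (fun t ht => (hlog t (Ico_subset_Icc_self ht)).hasDerivWithinAt)
    (fun t ht => hbound t (Ico_subset_Icc_self ht)) ⟨hab, le_rfl⟩

/-- Log-stability of the regularized minimizer: for twice continuously differentiable
convex `F`, with `x*_α` minimizing `F(x) + (α/2)‖x‖²`, the curve `α ↦ x*_α` having
derivative `D α` satisfying `(∇²F(x*_α) + αI) D α = -x*_α`, we have for `0 < α < α'`
that `‖x*_α - x*_{α'}‖ ≤ ‖x*_α‖ · log(α'/α)`. -/
theorem regularized_minimizer_log_stability {d : ℕ} (F : EuclideanSpace ℝ (Fin d) → ℝ)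
    (hF : ContDiff ℝ 2 F) (hconv : ConvexOn ℝ Set.univ F)
    (xc : ℝ → EuclideanSpace ℝ (Fin d)) (D : ℝ → EuclideanSpace ℝ (Fin d))
    (hmin : ∀ α, 0 < α → ∀ y, F (xc α) + (α / 2) * ‖xc α‖ ^ 2 ≤ F y + (α / 2) * ‖y‖ ^ 2)
    (hderiv : ∀ α, 0 < α → HasDerivAt xc (D α) α)
    (hDeq : ∀ α, 0 < α →
      (fderiv ℝ (gradient F) (xc α)) (D α) + α • D α = -xc α) :
    ∀ α α', 0 < α → α < α' → ‖xc α - xc α'‖ ≤ ‖xc α‖ * Real.log (α' / α) := by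
  intro α α' hα hlt
  have hpsd x := hconv.inner_fderiv_gradient_apply_self_nonneg (hF.differentiable two_ne_zero)
    (hF.differentiable_gradient x)
  rw [norm_sub_rev]
  refine norm_sub_le_mul_log_of_norm_deriv_le hα hlt.le
    (fun t ht => hderiv t (hα.trans_le ht.1)) fun t htI => ?_
  have ht : 0 < t := hα.trans_le htI.1
  have hnorm : ‖xc t‖ ≤ ‖xc α‖ := by
    rcases htI.1.eq_or_lt with rfl | hαt
    · rfl
    · exact norm_le_of_forall_add_smul_norm_sq_le F hαt (hmin α hα) (hmin t ht)
  calc ‖D t‖ ≤ ‖-xc t‖ / t := norm_le_norm_div_of_add_smul_eq (hpsd _) ht (hDeq t ht)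
    _ ≤ ‖xc α‖ / t := by rw [norm_neg]; gcongr
end

section
/- Let X be the convex hull of the candidate set, f : X → ℝ twice differentiable with minimizer x* of f over convex compact X ⊆ ℝ^d, and suppose (1/2)A ⪯ ∇²f(x) ⪯ 2A for all x ∈ X, where A is positive definite. If x_{t+1} ∈ X satisfies ⟨∇f(x_t), x_{t+1}⟩ + ‖x_{t+1} - x_t‖²_A ≤ min_{x ∈ X} { ⟨∇f(x_t), x⟩ + ‖x - x_t‖²_A } + φ/20, then the suboptimality Φ_t := f(x_t) - f(x*) satisfies Φ_{t+1} ≤ (15/16)Φ_t + φ/20. -/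
/-!
The upper Hessian bound gives `f x_{t+1} ≤ f x_t + ⟪∇f x_t, x_{t+1} - x_t⟫ + ‖x_{t+1} - x_t‖²_A`, and
by the step condition the right-hand side is at most `φ / 20` plus the model value at the point
`x_t + (x* - x_t) / 4`. The lower Hessian bound gives `⟪∇f x_t, x* - x_t⟫ ≤ -Φ_t - ‖x* - x_t‖²_A / 4`.
With the step `1 / 4` the two quadratic terms cancel, leaving `Φ_{t+1} ≤ (3 / 4) Φ_t + φ / 20`,
and `Φ_t ≥ 0` because `x*` is the minimizer.
-/

open RealInnerProductSpace Set

theorem le_add_deriv_add_half_of_deriv2_le {g g' g'' : ℝ → ℝ} {M : ℝ}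
    (hg : ∀ s, HasDerivAt g (g' s) s) (hg' : ∀ s, HasDerivAt g' (g'' s) s)
    (hM : ∀ s ∈ Ioo (0 : ℝ) 1, g'' s ≤ M) :
    g 1 ≤ g 0 + g' 0 + M / 2 := by
  have hψ : ∀ s, HasDerivAt (fun s => g s - M / 2 * s ^ 2) (g' s - M * s) s := fun s =>
    ((hg s).sub ((hasDerivAt_pow 2 s).const_mul (M / 2))).congr_deriv (by ring)
  have hψ' : ∀ s, HasDerivAt (fun s => g' s - M * s) (g'' s - M) s := fun s =>
    ((hg' s).sub ((hasDerivAt_id s).const_mul M)).congr_deriv (by simp)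
  have hconc : ConcaveOn ℝ (Icc 0 1) (fun s => g s - M / 2 * s ^ 2) := by
    refine concaveOn_of_hasDerivWithinAt2_nonpos (convex_Icc 0 1)
      (fun s _ => (hψ s).continuousAt.continuousWithinAt)
      (fun s _ => (hψ s).hasDerivWithinAt) (fun s _ => (hψ' s).hasDerivWithinAt) ?_
    rw [interior_Icc]
    exact fun s hs => sub_nonpos.2 (hM s hs)
  have := hconc.slope_le_of_hasDerivAt (by simp) (by simp) zero_lt_one (hψ 0)
  simp only [slope_def_field] at this
  linarith

theorem add_deriv_add_half_le_of_le_deriv2 {g g' g'' : ℝ → ℝ} {m : ℝ}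
    (hg : ∀ s, HasDerivAt g (g' s) s) (hg' : ∀ s, HasDerivAt g' (g'' s) s)
    (hm : ∀ s ∈ Ioo (0 : ℝ) 1, m ≤ g'' s) :
    g 0 + g' 0 + m / 2 ≤ g 1 := by
  have := le_add_deriv_add_half_of_deriv2_le (fun s => (hg s).neg) (fun s => (hg' s).neg)
    (M := -m) fun s hs => neg_le_neg (hm s hs)
  simp only [Pi.neg_apply] at this
  linarith

theorem add_smul_sub_mem_segment {V : Type*} [AddCommGroup V] [Module ℝ V] {x y : V} {s : ℝ}
    (hs : s ∈ Icc (0 : ℝ) 1) : x + s • (y - x) ∈ segment ℝ x y :=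
  (convex_segment x y).add_smul_sub_mem (left_mem_segment ℝ x y) (right_mem_segment ℝ x y) hs

theorem hasDerivAt_add_smul {V : Type*} [NormedAddCommGroup V] [NormedSpace ℝ V] (x v : V)
    (s : ℝ) : HasDerivAt (fun s : ℝ => x + s • v) v s := by
  simpa using ((hasDerivAt_id s).smul_const v).const_add x

section Gradient

variable {E : Type*} [NormedAddCommGroup E] [InnerProductSpace ℝ E] [CompleteSpace E] {f : E → ℝ}

theorem ContDiff.differentiable_gradient_s15 (hf : ContDiff ℝ 2 f) : Differentiable ℝ (gradient f) :=
  (InnerProductSpace.toDual ℝ E).symm.differentiable.comp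
    ((hf.fderiv_right (m := 1) le_rfl).differentiable one_ne_zero)

theorem hasDerivAt_comp_add_smul {x v : E} {s : ℝ} (hf : DifferentiableAt ℝ f (x + s • v)) :
    HasDerivAt (fun s : ℝ => f (x + s • v)) ⟪gradient f (x + s • v), v⟫ s := by
  rw [inner_gradient_left]
  exact hf.hasFDerivAt.comp_hasDerivAt s (hasDerivAt_add_smul x v s)

theorem hasDerivAt_inner_gradient_comp_add_smul {x v : E} {s : ℝ}
    (hf : DifferentiableAt ℝ (gradient f) (x + s • v)) :
    HasDerivAt (fun s : ℝ => ⟪gradient f (x + s • v), v⟫)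
      ⟪fderiv ℝ (gradient f) (x + s • v) v, v⟫ s := by
  simpa using (hf.hasFDerivAt.comp_hasDerivAt s (hasDerivAt_add_smul x v s)).inner ℝ
    (hasDerivAt_const s v)

theorem le_add_inner_gradient_add_half_of_hessian_le {x y : E} {M : ℝ}
    (hf : Differentiable ℝ f) (hf' : Differentiable ℝ (gradient f))
    (hM : ∀ z ∈ segment ℝ x y, ⟪fderiv ℝ (gradient f) z (y - x), y - x⟫ ≤ M) :
    f y ≤ f x + ⟪gradient f x, y - x⟫ + M / 2 := by
  simpa using le_add_deriv_add_half_of_deriv2_le (fun s => hasDerivAt_comp_add_smul (hf _))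
    (fun s => hasDerivAt_inner_gradient_comp_add_smul (hf' _))
    fun s hs => hM _ (add_smul_sub_mem_segment (Ioo_subset_Icc_self hs))

theorem add_inner_gradient_add_half_le_of_le_hessian {x y : E} {m : ℝ}
    (hf : Differentiable ℝ f) (hf' : Differentiable ℝ (gradient f))
    (hm : ∀ z ∈ segment ℝ x y, m ≤ ⟪fderiv ℝ (gradient f) z (y - x), y - x⟫) :
    f x + ⟪gradient f x, y - x⟫ + m / 2 ≤ f y := by
  simpa using add_deriv_add_half_le_of_le_deriv2 (fun s => hasDerivAt_comp_add_smul (hf _))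
    (fun s => hasDerivAt_inner_gradient_comp_add_smul (hf' _))
    fun s hs => hm _ (add_smul_sub_mem_segment (Ioo_subset_Icc_self hs))

end Gradient

theorem approx_newton_step_general {d : ℕ} (X : Set (EuclideanSpace ℝ (Fin d)))
    (hXconv : Convex ℝ X)
    (f : EuclideanSpace ℝ (Fin d) → ℝ) (hf : ContDiff ℝ 2 f)
    (A : EuclideanSpace ℝ (Fin d) →L[ℝ] EuclideanSpace ℝ (Fin d))
    (hhess : ∀ x ∈ X, ∀ v : EuclideanSpace ℝ (Fin d),
      (1 / 2) * ⟪A v, v⟫ ≤ ⟪(fderiv ℝ (gradient f) x) v, v⟫ ∧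
      ⟪(fderiv ℝ (gradient f) x) v, v⟫ ≤ 2 * ⟪A v, v⟫)
    (xs : EuclideanSpace ℝ (Fin d)) (hxs : xs ∈ X) (hxsmin : ∀ y ∈ X, f xs ≤ f y)
    (xt xt1 : EuclideanSpace ℝ (Fin d)) (hxt : xt ∈ X) (hxt1 : xt1 ∈ X)
    (φ : ℝ)
    (hstep : ∀ x ∈ X,
      ⟪gradient f xt, xt1⟫ + ⟪A (xt1 - xt), xt1 - xt⟫ ≤
        ⟪gradient f xt, x⟫ + ⟪A (x - xt), x - xt⟫ + φ / 20) :
    f xt1 - f xs ≤ (15 / 16) * (f xt - f xs) + φ / 20 := by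
  have hdf := hf.differentiable two_ne_zero
  have hdg := hf.differentiable_gradient_s15
  have hdescent := le_add_inner_gradient_add_half_of_hessian_le hdf hdg
    fun z hz => (hhess z (hXconv.segment_subset hxt hxt1 hz) (xt1 - xt)).2
  have hgrowth := add_inner_gradient_add_half_le_of_le_hessian hdf hdg
    fun z hz => (hhess z (hXconv.segment_subset hxt hxs hz) (xs - xt)).1
  have hmodel := hstep _ (hXconv.add_smul_sub_mem hxt hxs (t := 1 / 4) (by norm_num))
  simp only [add_sub_cancel_left, map_smul, inner_add_right, real_inner_smul_left,
    real_inner_smul_right] at hmodel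
  rw [inner_sub_right] at hdescent
  have hΦ : f xs ≤ f xt := hxsmin xt hxt
  linarith

/-- One step of the approximate Newton method under Hessian stability: if
`(1/2)A ⪯ ∇²f(x) ⪯ 2A` on a convex compact set `X` with minimizer `x*` of `f` on `X`,
and `x_{t+1} ∈ X` minimizes `⟨∇f(x_t), x⟩ + ‖x - x_t‖²_A` over `X` up to `φ/20`, then
`f(x_{t+1}) - f(x*) ≤ (15/16)(f(x_t) - f(x*)) + φ/20`. -/
theorem approx_newton_step {d : ℕ} (X : Set (EuclideanSpace ℝ (Fin d)))
    (hXconv : Convex ℝ X) (hXcomp : IsCompact X)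
    (f : EuclideanSpace ℝ (Fin d) → ℝ) (hf : ContDiff ℝ 2 f)
    (A : EuclideanSpace ℝ (Fin d) →L[ℝ] EuclideanSpace ℝ (Fin d))
    (hAsa : IsSelfAdjoint A) (hApos : ∀ v, v ≠ 0 → 0 < ⟪A v, v⟫)
    (hhess : ∀ x ∈ X, ∀ v : EuclideanSpace ℝ (Fin d),
      (1 / 2) * ⟪A v, v⟫ ≤ ⟪(fderiv ℝ (gradient f) x) v, v⟫ ∧
      ⟪(fderiv ℝ (gradient f) x) v, v⟫ ≤ 2 * ⟪A v, v⟫)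
    (xs : EuclideanSpace ℝ (Fin d)) (hxs : xs ∈ X) (hxsmin : ∀ y ∈ X, f xs ≤ f y)
    (xt xt1 : EuclideanSpace ℝ (Fin d)) (hxt : xt ∈ X) (hxt1 : xt1 ∈ X)
    (φ : ℝ) (hφ : 0 < φ)
    (hstep : ∀ x ∈ X,
      ⟪gradient f xt, xt1⟫ + ⟪A (xt1 - xt), xt1 - xt⟫ ≤
        ⟪gradient f xt, x⟫ + ⟪A (x - xt), x - xt⟫ + φ / 20) :
    f xt1 - f xs ≤ (15 / 16) * (f xt - f xs) + φ / 20 :=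
  approx_newton_step_general X hXconv f hf A hhess xs hxs hxsmin xt xt1 hxt hxt1 φ hstep
end
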